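/- arXiv:2411.19800 — 6 statements merged into one kernel-verified Lean document; each statement's English description precedes it below -/
import Mathlib

section
/- Let T be a tree with at least one edge. The unique minimum monitoring edge-geodetic set of T is exactly the set of leaves of T, so meg(T) equals the number of leaves of T. -/
open SimpleGraph

variable {V : Type*}

/-- A pair of vertices `u, v` monitors edge `e` in `G` if `u` and `v` are connected
and `e` lies on every shortest path (walk of length `G.dist u v`) between them. -/
def monitors (G : SimpleGraph V) (u v : V) (e : Sym2 V) : Prop :=
  G.Reachable u v ∧ ∀ p : G.Walk u v, p.length = G.dist u v → e ∈ p.edges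

/-- `M` is a monitoring edge-geodetic set of `G`. -/
def IsMEGSet (G : SimpleGraph V) (M : Set V) : Prop :=
  ∀ e ∈ G.edgeSet, ∃ u ∈ M, ∃ v ∈ M, monitors G u v e

/-- The monitoring edge-geodetic number: minimum size of an MEG-set. -/
noncomputable def meg (G : SimpleGraph V) : ℕ :=
  sInf {n | ∃ M : Finset V, IsMEGSet G ↑M ∧ M.card = n}

/-!
A vertex of degree one lying on a path can only be one of its endpoints, since an inner vertex
has two distinct neighbours on the path; so every MEG-set contains every leaf, in any graph.
Conversely, in a forest every walk from `u` to `v` traverses all edges of the unique `u`–`v`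
path, and a path through a given edge can be grown at an end of degree at least two (acyclicity
keeps the new neighbour off the path) until both ends are leaves. Hence the leaves form an
MEG-set contained in every other one.
-/

namespace SimpleGraph

variable {G : SimpleGraph V}

theorem Walk.IsPath.eq_or_eq_of_degree_eq_one {u v x : V} {p : G.Walk u v} (hp : p.IsPath)
    (hx : x ∈ p.support) [Fintype (G.neighborSet x)] (hdeg : G.degree x = 1) :
    x = u ∨ x = v := by
  obtain ⟨i, rfl, hi⟩ := Walk.mem_support_iff_exists_getVert.mp hx
  by_contra! hend
  have hi0 : i ≠ 0 := fun h => hend.1 (h ▸ p.getVert_zero)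
  have hil : i < p.length := lt_of_le_of_ne hi fun h => hend.2 (h ▸ p.getVert_length)
  obtain ⟨y, -, hy⟩ := degree_eq_one_iff_existsUnique_adj.mp hdeg
  have hprev : p.getVert (i - 1) = y := by
    have := p.adj_getVert_succ (i := i - 1) (by omega)
    rw [Nat.sub_add_cancel (Nat.pos_of_ne_zero hi0)] at this
    exact hy _ this.symm
  have hnext : p.getVert (i + 1) = y := hy _ (p.adj_getVert_succ hil)
  have := hp.getVert_injOn (by simp only [Set.mem_ofPred_eq]; omega)
    (by simp only [Set.mem_ofPred_eq]; omega) (hprev.trans hnext.symm)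
  omega

theorem IsAcyclic.edges_subset_edges_of_isPath (hG : G.IsAcyclic) {u v : V} {p : G.Walk u v}
    (hp : p.IsPath) (q : G.Walk u v) : p.edges ⊆ q.edges := by
  classical
  have hpq : p = q.bypass :=
    congrArg Subtype.val ((hG.subsingleton_path u v).elim ⟨p, hp⟩ q.toPath)
  rw [hpq]
  exact q.edges_bypass_subset_edges

theorem IsAcyclic.monitors_of_mem_edges (hG : G.IsAcyclic) {u v : V} {p : G.Walk u v}
    (hp : p.IsPath) {e : Sym2 V} (he : e ∈ p.edges) : monitors G u v e :=
  ⟨p.reachable, fun q _ => hG.edges_subset_edges_of_isPath hp q he⟩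

theorem IsAcyclic.exists_degree_eq_one_isPath_mem_edges [Fintype V] [DecidableRel G.Adj]
    (hG : G.IsAcyclic) {u v : V} {p : G.Walk u v} (hp : p.IsPath) {e : Sym2 V}
    (he : e ∈ p.edges) : ∃ w, G.degree w = 1 ∧ ∃ q : G.Walk w v, q.IsPath ∧ e ∈ q.edges := by
  induction h : Fintype.card V - p.length using Nat.strong_induction_on generalizing u p with
  | _ n ih =>
    cases p with
    | nil => simp at he
    | @cons _ x _ hux p =>
      by_cases hdeg : G.degree u = 1
      · exact ⟨u, hdeg, _, hp, he⟩
      have hpos : 0 < G.degree u := G.degree_pos_iff_exists_adj u |>.mpr ⟨x, hux⟩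
      obtain ⟨y, hy, hyx⟩ := Finset.exists_mem_ne (by omega : 1 < G.degree u) x
      rw [mem_neighborFinset] at hy
      have hyp : y ∉ (Walk.cons hux p).support := fun hmem =>
        hyx (by simpa using hG.eq_snd_of_adj_start hp hy hmem)
      have hp' : (Walk.cons hy.symm (Walk.cons hux p)).IsPath := hp.cons hyp
      have hlen := hp'.length_lt
      refine ih _ ?_ hp' (List.mem_cons_of_mem _ he) rfl
      simp only [Walk.length_cons] at hlen h ⊢
      omega

theorem IsAcyclic.exists_isPath_degree_eq_one_mem_edges [Fintype V] [DecidableRel G.Adj]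
    (hG : G.IsAcyclic) {e : Sym2 V} (he : e ∈ G.edgeSet) :
    ∃ u v, G.degree u = 1 ∧ G.degree v = 1 ∧ ∃ p : G.Walk u v, p.IsPath ∧ e ∈ p.edges := by
  obtain ⟨a, b⟩ := e
  have hab : G.Adj a b := he
  obtain ⟨u, hu, q, hq, hq_ab⟩ :=
    hG.exists_degree_eq_one_isPath_mem_edges (e := s(a, b)) (Path.singleton hab).2 (by simp)
  obtain ⟨v, hv, r, hr, hr_ab⟩ :=
    hG.exists_degree_eq_one_isPath_mem_edges hq.reverse (by simpa using hq_ab)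
  exact ⟨v, u, hv, hu, r, hr, hr_ab⟩

theorem IsAcyclic.isMEGSet_setOf_degree_eq_one [Fintype V] [DecidableRel G.Adj]
    (hG : G.IsAcyclic) : IsMEGSet G {v | G.degree v = 1} := fun _ he => by
  obtain ⟨u, v, hu, hv, p, hp, hep⟩ := hG.exists_isPath_degree_eq_one_mem_edges he
  exact ⟨u, hu, v, hv, hG.monitors_of_mem_edges hp hep⟩

end SimpleGraph

variable {G : SimpleGraph V}

theorem IsMEGSet.mem_of_degree_eq_one {M : Set V} (hM : IsMEGSet G M) {x : V}
    [Fintype (G.neighborSet x)] (hx : G.degree x = 1) : x ∈ M := by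
  obtain ⟨y, hxy, -⟩ := degree_eq_one_iff_existsUnique_adj.mp hx
  obtain ⟨u, hu, v, hv, huv, hmon⟩ := hM s(x, y) hxy
  obtain ⟨p, hp, hlen⟩ := huv.exists_path_of_dist
  rcases hp.eq_or_eq_of_degree_eq_one (p.fst_mem_support_of_mem_edges (hmon p hlen)) hx
    with rfl | rfl
  exacts [hu, hv]

theorem meg_eq_card_of_isMEGSet_of_subset {L : Finset V} (hL : IsMEGSet G L)
    (hmin : ∀ M : Finset V, IsMEGSet G M → L ⊆ M) : meg G = L.card :=
  le_antisymm (Nat.sInf_le ⟨L, hL, rfl⟩) <| le_csInf ⟨_, L, hL, rfl⟩ <| by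
    rintro _ ⟨M, hM, rfl⟩
    exact Finset.card_le_card (hmin M hM)

theorem tree_meg_eq_leaves_general [Fintype V] (G : SimpleGraph V)
    [DecidableRel G.Adj] (hT : G.IsTree) :
    meg G = (Finset.univ.filter (fun v => G.degree v = 1)).card ∧
    IsMEGSet G ↑(Finset.univ.filter (fun v => G.degree v = 1)) ∧
    ∀ M : Finset V, IsMEGSet G ↑M → M.card = meg G →
      M = Finset.univ.filter (fun v => G.degree v = 1) := by
  set L := Finset.univ.filter (fun v => G.degree v = 1)
  have hL : IsMEGSet G ↑L := by
    simpa [L] using hT.isAcyclic.isMEGSet_setOf_degree_eq_one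
  have hmin : ∀ M : Finset V, IsMEGSet G ↑M → L ⊆ M := fun M hM x hx =>
    hM.mem_of_degree_eq_one (Finset.mem_filter.mp hx).2
  have hmeg := meg_eq_card_of_isMEGSet_of_subset hL hmin
  exact ⟨hmeg, hL, fun M hM hcard =>
    (Finset.eq_of_subset_of_card_le (hmin M hM) (by omega)).symm⟩

/-- For a tree with at least one edge, the set of leaves is the unique minimum
MEG-set, and `meg` equals the number of leaves. -/
theorem tree_meg_eq_leaves [Fintype V] [DecidableEq V] (G : SimpleGraph V)
    [DecidableRel G.Adj] (hT : G.IsTree) (hne : G.edgeSet.Nonempty) :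
    meg G = (Finset.univ.filter (fun v => G.degree v = 1)).card ∧
    IsMEGSet G ↑(Finset.univ.filter (fun v => G.degree v = 1)) ∧
    ∀ M : Finset V, IsMEGSet G ↑M → M.card = meg G →
      M = Finset.univ.filter (fun v => G.degree v = 1) :=
  tree_meg_eq_leaves_general G hT
end

section
/- Let G be a tree and e = uv an edge with deg(u) ≥ 3 and deg(v) ≥ 3, or with deg(u) = 1 and deg(v) = 2. Then meg(G \ {e}) = meg(G). -/
open SimpleGraph

variable {V : Type*}

/-!
In a finite forest, a vertex set monitors every edge exactly when it contains every leaf. A leaf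
lies in the interior of no path, so a pair monitoring its pendant edge must contain it. Conversely,
geodesics in a forest are its unique paths, and a longest path through a given edge ends in leaves
at both sides. Hence `meg` counts leaves, and deleting `uv` changes no vertex's leaf status when
both degrees are at least 3, while for `deg u = 1`, `deg v = 2` it trades the leaf `u` (now
isolated) for the new leaf `v`.
-/

open Finset

namespace SimpleGraph

variable {G : SimpleGraph V}

theorem Walk.IsPath.one_lt_degree_of_mem_support [Fintype V] [DecidableRel G.Adj] {a b x : V}
    {p : G.Walk a b} (hp : p.IsPath) (hx : x ∈ p.support) (hxa : x ≠ a) (hxb : x ≠ b) :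
    1 < G.degree x := by
  induction p with
  | nil => exact absurd (by simpa using hx) hxa
  | @cons a c b hac q ih =>
    rw [Walk.cons_isPath_iff] at hp
    rw [Walk.support_cons, List.mem_cons] at hx
    obtain rfl | hx := hx
    · exact absurd rfl hxa
    by_cases hxc : x = c
    · subst hxc
      cases q with
      | nil => exact absurd rfl hxb
      | @cons _ d _ hcd r =>
        have had : a ≠ d := by
          rintro rfl
          exact hp.2 (by simp)
        rw [← card_neighborFinset_eq_degree, one_lt_card_iff]
        exact ⟨a, d, by simpa using hac.symm, by simpa using hcd, had⟩
    · exact ih hp.1 hx hxc hxb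

namespace IsAcyclic

theorem length_eq_dist (hG : G.IsAcyclic) {a b : V} {p : G.Walk a b} (hp : p.IsPath) :
    p.length = G.dist a b := by
  obtain ⟨q, hq⟩ := p.reachable.exists_walk_length_eq_dist
  have hpq : p = q := congrArg Subtype.val <|
    (hG.subsingleton_path a b).elim ⟨p, hp⟩ ⟨q, q.isPath_of_length_eq_dist hq⟩
  rw [hpq, hq]

theorem monitors_iff (hG : G.IsAcyclic) {a b : V} {p : G.Walk a b} (hp : p.IsPath)
    {e : Sym2 V} : monitors G a b e ↔ e ∈ p.edges := by
  refine ⟨fun hm => hm.2 p (hG.length_eq_dist hp), fun he => ⟨p.reachable, fun q hq => ?_⟩⟩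
  have hqp : q = p := congrArg Subtype.val <|
    (hG.subsingleton_path a b).elim ⟨q, q.isPath_of_length_eq_dist hq⟩ ⟨p, hp⟩
  rwa [hqp]

theorem eq_or_eq_of_monitors_of_degree_eq_one [Fintype V] [DecidableRel G.Adj]
    (hG : G.IsAcyclic) {a b x w : V} (hm : monitors G a b s(x, w)) (hx : G.degree x = 1) :
    x = a ∨ x = b := by
  obtain ⟨p, hp⟩ := hm.1.exists_isPath
  have hxp := p.fst_mem_support_of_mem_edges ((hG.monitors_iff hp).1 hm)
  by_contra! hxab
  have := hp.one_lt_degree_of_mem_support hxp hxab.1 hxab.2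
  omega

theorem exists_cons_isPath [Fintype V] [DecidableRel G.Adj] (hG : G.IsAcyclic) {a b : V}
    {p : G.Walk a b} (hp : p.IsPath) (hnil : ¬p.Nil) (ha : G.degree a ≠ 1) :
    ∃ z, ∃ h : G.Adj z a, (Walk.cons h p).IsPath := by
  obtain ⟨z, haz, hz⟩ : ∃ z, G.Adj a z ∧ z ≠ p.snd := by
    by_contra! h
    exact ha (degree_eq_one_iff_existsUnique_adj.2 ⟨p.snd, p.adj_snd hnil, h⟩)
  exact ⟨z, haz.symm, hp.cons fun hzp => hz (hG.eq_snd_of_adj_start hp haz hzp)⟩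

theorem degree_eq_one_of_forall_length_le [Fintype V] [DecidableRel G.Adj] (hG : G.IsAcyclic)
    {a b : V} {e : Sym2 V} {p : G.Walk a b} (hp : p.IsPath) (he : e ∈ p.edges)
    (hmax : ∀ (a' b' : V) (q : G.Walk a' b'), q.IsPath → e ∈ q.edges → q.length ≤ p.length) :
    G.degree a = 1 := by
  by_contra ha
  have hnil : ¬p.Nil := fun hn => by simp [Walk.edges_eq_nil.2 hn] at he
  obtain ⟨z, hz, hzp⟩ := hG.exists_cons_isPath hp hnil ha
  have := hmax z b _ hzp (by simp [he])
  simp at this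

theorem exists_isPath_mem_edges_degree_eq_one [Fintype V] [DecidableRel G.Adj]
    (hG : G.IsAcyclic) {x y : V} (hxy : G.Adj x y) :
    ∃ (a b : V) (p : G.Walk a b), p.IsPath ∧ s(x, y) ∈ p.edges ∧
      G.degree a = 1 ∧ G.degree b = 1 := by
  let S := {n | ∃ (a b : V) (p : G.Walk a b), p.IsPath ∧ s(x, y) ∈ p.edges ∧ p.length = n}
  have hS : BddAbove S := ⟨Fintype.card V, by rintro _ ⟨_, _, p, hp, -, rfl⟩; exact hp.length_lt.le⟩
  have hne : S.Nonempty := ⟨1, x, y, hxy.toWalk, by simp [hxy.ne], by simp, rfl⟩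
  obtain ⟨a, b, p, hp, he, hlen⟩ := Nat.sSup_mem hne hS
  have hmax (a' b' : V) (q : G.Walk a' b') (hq : q.IsPath) (he' : s(x, y) ∈ q.edges) :
      q.length ≤ p.length :=
    hlen ▸ le_csSup hS ⟨a', b', q, hq, he', rfl⟩
  refine ⟨a, b, p, hp, he, hG.degree_eq_one_of_forall_length_le hp he hmax, ?_⟩
  refine hG.degree_eq_one_of_forall_length_le hp.reverse (by simpa using he) fun a' b' q hq he' => ?_
  simpa using hmax a' b' q hq he'

theorem isMEGSet_iff [Fintype V] [DecidableRel G.Adj] (hG : G.IsAcyclic) (M : Set V) :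
    IsMEGSet G M ↔ ∀ x, G.degree x = 1 → x ∈ M := by
  constructor
  · intro hM x hx
    obtain ⟨w, hw, -⟩ := degree_eq_one_iff_existsUnique_adj.1 hx
    obtain ⟨a, ha, b, hb, hm⟩ := hM s(x, w) hw
    rcases hG.eq_or_eq_of_monitors_of_degree_eq_one hm hx with rfl | rfl <;> assumption
  · intro hM e
    induction e using Sym2.ind with
    | h x y =>
      intro hxy
      obtain ⟨a, b, p, hp, he, ha, hb⟩ := hG.exists_isPath_mem_edges_degree_eq_one hxy
      exact ⟨a, hM a ha, b, hM b hb, (hG.monitors_iff hp).2 he⟩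

theorem meg_eq_card_leaves [Fintype V] [DecidableRel G.Adj] (hG : G.IsAcyclic) :
    meg G = #{x | G.degree x = 1} := by
  have hL : IsMEGSet G ↑({x | G.degree x = 1} : Finset V) := (hG.isMEGSet_iff _).2 (by simp)
  refine le_antisymm (Nat.sInf_le ⟨_, hL, rfl⟩) (le_csInf ⟨_, _, hL, rfl⟩ ?_)
  rintro _ ⟨M, hM, rfl⟩
  exact card_le_card fun x hx => (hG.isMEGSet_iff _).1 hM x (mem_filter.1 hx).2

end IsAcyclic

section DeleteEdge

variable [Fintype V] [DecidableEq V] [DecidableRel G.Adj] {u v : V}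

theorem degree_deleteEdges_singleton_of_ne {x : V} (hxu : x ≠ u) (hxv : x ≠ v) :
    (G.deleteEdges {s(u, v)}).degree x = G.degree x := by
  simp only [← card_neighborFinset_eq_degree]
  congr 1
  ext y
  simp [hxu, hxv]

theorem degree_deleteEdges_singleton_left (huv : G.Adj u v) :
    (G.deleteEdges {s(u, v)}).degree u = G.degree u - 1 := by
  rw [← card_neighborFinset_eq_degree, ← card_neighborFinset_eq_degree,
    ← card_erase_of_mem (G.mem_neighborFinset _ _ |>.2 huv)]
  congr 1
  ext y
  simp [huv.ne, and_comm]

theorem degree_deleteEdges_singleton_right (huv : G.Adj u v) :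
    (G.deleteEdges {s(u, v)}).degree v = G.degree v - 1 := by
  rw [Sym2.eq_swap]
  exact degree_deleteEdges_singleton_left huv.symm

theorem card_leaves_deleteEdges_of_three_le (huv : G.Adj u v) (hu : 3 ≤ G.degree u)
    (hv : 3 ≤ G.degree v) :
    #{x | (G.deleteEdges {s(u, v)}).degree x = 1} = #{x | G.degree x = 1} := by
  congr 1
  refine filter_congr fun x _ => ?_
  by_cases hxu : x = u
  · rw [hxu, degree_deleteEdges_singleton_left huv]
    omega
  by_cases hxv : x = v
  · rw [hxv, degree_deleteEdges_singleton_right huv]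
    omega
  rw [degree_deleteEdges_singleton_of_ne hxu hxv]

theorem card_leaves_deleteEdges_of_degree_eq_one_of_degree_eq_two (huv : G.Adj u v)
    (hu : G.degree u = 1) (hv : G.degree v = 2) :
    #{x | (G.deleteEdges {s(u, v)}).degree x = 1} = #{x | G.degree x = 1} := by
  have hleaves : ({x | (G.deleteEdges {s(u, v)}).degree x = 1} : Finset V) =
      insert v (({x | G.degree x = 1} : Finset V).erase u) := by
    ext x
    simp only [mem_filter, mem_univ, true_and, mem_insert, mem_erase]
    by_cases hxu : x = u
    · subst hxu
      simp [degree_deleteEdges_singleton_left huv, hu, huv.ne]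
    by_cases hxv : x = v
    · subst hxv
      simp [degree_deleteEdges_singleton_right huv, hv]
    simp [degree_deleteEdges_singleton_of_ne hxu hxv, hxu, hxv]
  rw [hleaves, card_insert_of_notMem (by simp [hv]), card_erase_add_one (by simp [hu])]

end DeleteEdge

end SimpleGraph

/-- Removing an edge `uv` from a tree, with `deg u ≥ 3 ∧ deg v ≥ 3` or with
`deg u = 1 ∧ deg v = 2`, leaves `meg` unchanged. -/
theorem tree_deleteEdge_meg_unchanged [Fintype V] (G : SimpleGraph V) [DecidableRel G.Adj]
    (hT : G.IsTree) (u v : V) (huv : G.Adj u v)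
    (h : (3 ≤ G.degree u ∧ 3 ≤ G.degree v) ∨ (G.degree u = 1 ∧ G.degree v = 2)) :
    meg (G.deleteEdges {s(u, v)}) = meg G := by
  classical
  have hA := hT.isAcyclic
  rw [(hA.anti (deleteEdges_le _)).meg_eq_card_leaves, hA.meg_eq_card_leaves]
  rcases h with ⟨hu, hv⟩ | ⟨hu, hv⟩
  · exact card_leaves_deleteEdges_of_three_le huv hu hv
  · exact card_leaves_deleteEdges_of_degree_eq_one_of_degree_eq_two huv hu hv
end

section
/- Let G be a tree with edge set E, and let G' be obtained from G by removing exactly k edges with k > ⌈|E|/2⌉ − 1. Then meg(G') < meg(G) + 2k. -/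
open SimpleGraph

variable {V : Type*}

lemma univ_isMEGSet [Fintype V] (H : SimpleGraph V) :
    IsMEGSet H ↑(Finset.univ : Finset V) := by
  intro e he
  induction e with
  | h u v =>
    rw [SimpleGraph.mem_edgeSet] at he
    refine ⟨u, by simp, v, by simp, he.reachable, ?_⟩
    intro p hp
    have hd : H.dist u v = 1 := by
      rw [SimpleGraph.dist_eq_one_iff_adj]; exact he
    rw [hd] at hp
    cases p with
    | nil => simp at hp
    | @cons _ w _ h q =>
      have hq : q.length = 0 := by simpa using hp
      have : w = v := q.eq_of_length_eq_zero hq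
      subst this
      simp

lemma meg_le_card [Fintype V] (H : SimpleGraph V) : meg H ≤ Fintype.card V :=
  Nat.sInf_le ⟨Finset.univ, univ_isMEGSet H, Finset.card_univ⟩

lemma two_le_meg [Fintype V] (H : SimpleGraph V) {e : Sym2 V}
    (he : e ∈ H.edgeSet) : 2 ≤ meg H := by
  refine le_csInf ⟨Fintype.card V, Finset.univ, univ_isMEGSet H, Finset.card_univ⟩ ?_
  rintro n ⟨M, hM, rfl⟩
  obtain ⟨u, hu, v, hv, _, hmon⟩ := hM e he
  have huv : u ≠ v := by
    rintro rfl
    have := hmon SimpleGraph.Walk.nil (by simp [SimpleGraph.dist_self])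
    simp at this
  exact Finset.one_lt_card.mpr ⟨u, by simpa using hu, v, by simpa using hv, huv⟩

/-- If exactly `k > ⌈|E|/2⌉ - 1` edges are removed from a tree, then
`meg G' < meg G + 2k`. -/
theorem tree_deleteEdges_lt [Fintype V] [DecidableEq V] (G : SimpleGraph V)
    [DecidableRel G.Adj] (hT : G.IsTree) (k : ℕ) (s : Finset (Sym2 V))
    (hs : ↑s ⊆ G.edgeSet) (hcard : s.card = k)
    (hk : (G.edgeFinset.card + 1) / 2 - 1 < k) :
    meg (G.deleteEdges ↑s) < meg G + 2 * k := by
  have hn : G.edgeFinset.card + 1 = Fintype.card V := hT.card_edgeFinset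
  have hm : 1 ≤ G.edgeFinset.card := by
    by_contra h
    have h0 : G.edgeFinset.card = 0 := by omega
    have hse : s = ∅ := by
      apply Finset.eq_empty_of_forall_notMem
      intro e hes
      have hmem : e ∈ G.edgeFinset := SimpleGraph.mem_edgeFinset.mpr (hs hes)
      rw [Finset.card_eq_zero.mp h0] at hmem
      simp at hmem
    rw [hse] at hcard
    simp at hcard
    omega
  obtain ⟨e, he⟩ := Finset.card_pos.mp hm
  have h2 : 2 ≤ meg G := two_le_meg G (SimpleGraph.mem_edgeFinset.mp he)
  have h1 : meg (G.deleteEdges ↑s) ≤ Fintype.card V := meg_le_card _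
  omega
end

section
/- Let G be a connected graph and let G' be obtained from G by removing some set of pendant edges (edges with one endpoint of degree 1). Then meg(G') ≤ meg(G). -/
open SimpleGraph

variable {V : Type*}

/-- Two neighbors of a degree-one vertex coincide. -/
lemma aux_adj_eq_of_degree_one [Fintype V] {G : SimpleGraph V} [DecidableRel G.Adj]
    {a c d : V} (h : G.degree a = 1) (hc : G.Adj a c) (hd : G.Adj a d) : c = d := by
  have hc' : c ∈ G.neighborFinset a := (G.mem_neighborFinset a c).2 hc
  have hd' : d ∈ G.neighborFinset a := (G.mem_neighborFinset a d).2 hd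
  exact Finset.card_le_one.1 (le_of_eq h) c hc' d hd'

/-- A degree-one vertex has a neighbor. -/
lemma aux_exists_adj [Fintype V] {G : SimpleGraph V} [DecidableRel G.Adj]
    {a : V} (h : G.degree a = 1) : ∃ b, G.Adj a b := by
  have hc : (G.neighborFinset a).card = 1 := by
    rw [G.card_neighborFinset_eq_degree]; exact h
  have : (G.neighborFinset a).Nonempty := Finset.card_pos.1 (by omega)
  obtain ⟨b, hb⟩ := this
  exact ⟨b, (G.mem_neighborFinset a b).1 hb⟩

/-- No pair `(u, u)` monitors any edge. -/
lemma aux_monitors_self {G : SimpleGraph V} {u : V} {e : Sym2 V}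
    (h : monitors G u u e) : False := by
  have := h.2 Walk.nil (by simp [SimpleGraph.dist_self])
  simp at this

/-- Monitoring is symmetric in the pair of vertices. -/
lemma aux_monitors_symm {G : SimpleGraph V} {u v : V} {e : Sym2 V}
    (h : monitors G u v e) : monitors G v u e := by
  refine ⟨h.1.symm, fun p hp => ?_⟩
  have := h.2 p.reverse (by rw [Walk.length_reverse, hp, SimpleGraph.dist_comm])
  rwa [Walk.edges_reverse, List.mem_reverse] at this

/-- A degree-one vertex on a shortest walk must be an endpoint. -/
lemma aux_leaf_endpoint [Fintype V] {G : SimpleGraph V} [DecidableRel G.Adj]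
    {u v a : V} (hdeg : G.degree a = 1) (q : G.Walk u v)
    (hq : q.length = G.dist u v) (ha : a ∈ q.support) : a = u ∨ a = v := by
  classical
  by_contra hcon
  push_neg at hcon
  obtain ⟨hau, hav⟩ := hcon
  set q1 := q.takeUntil a ha with hq1
  set q2 := q.dropUntil a ha with hq2
  have hlen : q1.length + q2.length = q.length := by
    rw [← Walk.length_append, Walk.take_spec]
  -- q1.reverse : Walk a u, nonempty
  have h1 : ¬ q1.reverse.Nil := by
    rw [Walk.nil_iff_length_eq, Walk.length_reverse]
    intro h0
    exact hau (Walk.eq_of_length_eq_zero h0).symm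
  obtain ⟨c, hac, r, hr⟩ := Walk.not_nil_iff.1 h1
  have h2 : ¬ q2.Nil := by
    rw [Walk.nil_iff_length_eq]
    intro h0
    exact hav (Walk.eq_of_length_eq_zero h0)
  obtain ⟨d, had, r', hr'⟩ := Walk.not_nil_iff.1 h2
  have hcd : c = d := aux_adj_eq_of_degree_one hdeg hac had
  subst hcd
  -- build the shortcut walk
  have hw : G.Walk u v := (r.reverse.copy rfl rfl).append r'
  have hdist : G.dist u v ≤ r.length + r'.length := by
    have := SimpleGraph.dist_le ((r.reverse).append r')
    rwa [Walk.length_append, Walk.length_reverse] at this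
  have hl1 : q1.length = r.length + 1 := by
    have : q1.reverse.length = r.length + 1 := by rw [hr]; simp
    rwa [Walk.length_reverse] at this
  have hl2 : q2.length = r'.length + 1 := by rw [hr']; simp
  omega

/-- Shifting a monitoring pair off a leaf. -/
lemma aux_reduce [Fintype V] {G : SimpleGraph V} [DecidableRel G.Adj]
    {u v b : V} {e : Sym2 V} (hdeg : G.degree u = 1) (hadj : G.Adj u b)
    (he : e ≠ s(u, b)) (hm : monitors G u v e) :
    monitors G b v e ∧ G.degree b ≠ 1 := by
  rcases eq_or_ne u v with rfl | hne
  · exact absurd hm aux_monitors_self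
  obtain ⟨q, hq⟩ := hm.1.exists_walk_length_eq_dist
  -- q = cons h r
  have hq0 : ¬ q.Nil := by
    rw [Walk.nil_iff_length_eq]
    intro h0
    exact hne (Walk.eq_of_length_eq_zero h0)
  obtain ⟨c, huc, r, hrr⟩ := Walk.not_nil_iff.1 hq0
  have hcb : c = b := aux_adj_eq_of_degree_one hdeg huc hadj
  subst hcb
  have hreach : G.Reachable c v := ⟨r⟩
  have hdistle : G.dist u v ≤ G.dist c v + 1 := by
    obtain ⟨p0, hp0⟩ := hreach.exists_walk_length_eq_dist
    have := SimpleGraph.dist_le (Walk.cons hadj p0)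
    simpa [hp0, Nat.add_comm] using this
  have hdistge : G.dist c v + 1 ≤ G.dist u v := by
    have hrlen : r.length + 1 = G.dist u v := by
      rw [← hq, hrr]; simp
    have := SimpleGraph.dist_le r
    omega
  have hdist : G.dist u v = G.dist c v + 1 := le_antisymm hdistle hdistge
  have hmon : monitors G c v e := by
    refine ⟨hreach, fun p hp => ?_⟩
    have := hm.2 (Walk.cons hadj p) (by simp [hp, hdist, Nat.add_comm])
    rw [Walk.edges_cons] at this
    rcases List.mem_cons.1 this with h | h
    · exact absurd h.symm he.symm
    · exact h
  refine ⟨hmon, fun hdegb => ?_⟩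
  -- if b also has degree one, then v = b, contradicting monitoring self
  have hbmem : c ∈ q.support := by
    rw [hrr, Walk.support_cons]
    exact List.mem_cons_of_mem _ r.start_mem_support
  have := aux_leaf_endpoint hdegb q hq hbmem
  rcases this with h | h
  · exact G.irrefl (h ▸ hadj)
  · subst h
    exact absurd hmon aux_monitors_self

/-- Transfer of monitoring to the graph with pendant edges deleted,
when neither vertex of the pair is an endpoint of a deleted pendant edge. -/
lemma aux_transfer [Fintype V] {G : SimpleGraph V} [DecidableRel G.Adj]
    (s : Finset (Sym2 V))
    (hs : ∀ e ∈ s, e ∈ G.edgeSet ∧ ∃ w ∈ e, G.degree w = 1)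
    {u v : V} {e : Sym2 V}
    (hu : ¬ (G.degree u = 1 ∧ ∃ e' ∈ s, u ∈ e'))
    (hv : ¬ (G.degree v = 1 ∧ ∃ e' ∈ s, v ∈ e'))
    (hm : monitors G u v e) (he : e ∈ (G.deleteEdges ↑s).edgeSet) :
    monitors (G.deleteEdges ↑s) u v e := by
  obtain ⟨q, hq⟩ := hm.1.exists_walk_length_eq_dist
  -- the shortest walk avoids all edges of s
  have hfree : ∀ e' ∈ q.edges, e' ∈ (G.deleteEdges ↑s).edgeSet := by
    intro e' he'
    rw [edgeSet_deleteEdges]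
    refine ⟨q.edges_subset_edgeSet he', ?_⟩
    intro hes
    obtain ⟨w, hwe, hwdeg⟩ := (hs e' hes).2
    have hwsup : w ∈ q.support := by
      obtain ⟨y, hy⟩ := Sym2.mem_iff_exists.1 hwe
      subst hy
      exact q.fst_mem_support_of_mem_edges he'
    rcases aux_leaf_endpoint hwdeg q hq hwsup with rfl | rfl
    · exact hu ⟨hwdeg, e', hes, hwe⟩
    · exact hv ⟨hwdeg, e', hes, hwe⟩
  set q' := q.transfer (G.deleteEdges ↑s) hfree with hq'
  have hreach' : (G.deleteEdges ↑s).Reachable u v := ⟨q'⟩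
  have hsub : ∀ {x y : V} (p : (G.deleteEdges ↑s).Walk x y),
      ∀ e' ∈ p.edges, e' ∈ G.edgeSet := by
    intro x y p e' he'
    exact (edgeSet_deleteEdges (↑s : Set (Sym2 V)) ▸ p.edges_subset_edgeSet he').1
  have hdist : (G.deleteEdges ↑s).dist u v = G.dist u v := by
    apply le_antisymm
    · have := SimpleGraph.dist_le q'
      rwa [hq', Walk.length_transfer, hq] at this
    · obtain ⟨p0, hp0⟩ := hreach'.exists_walk_length_eq_dist
      have := SimpleGraph.dist_le (p0.transfer G (hsub p0))
      rwa [Walk.length_transfer, hp0] at this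
  refine ⟨hreach', fun p hp => ?_⟩
  have := hm.2 (p.transfer G (hsub p)) (by rw [Walk.length_transfer, hp, hdist])
  rwa [Walk.edges_transfer] at this

/-- The full vertex set is always an MEG-set. -/
lemma aux_univ_isMEGSet [Fintype V] (G : SimpleGraph V) :
    IsMEGSet G ↑(Finset.univ : Finset V) := by
  intro e he
  induction e with
  | _ a b =>
    have hab : G.Adj a b := (G.mem_edgeSet).1 he
    refine ⟨a, by simp, b, by simp, hab.reachable, fun p hp => ?_⟩
    have h1 : G.dist a b = 1 := dist_eq_one_iff_adj.2 hab
    rw [h1] at hp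
    cases p with
    | nil => simp at hp
    | cons h q =>
      have hq0 : q.length = 0 := by simpa using hp
      have := Walk.eq_of_length_eq_zero hq0
      subst this
      simp

/-- Removing any set of pendant edges from a connected graph does not increase `meg`. -/
theorem deletePendantEdges_meg_le [Fintype V] (G : SimpleGraph V) [DecidableRel G.Adj]
    (hconn : G.Connected) (s : Finset (Sym2 V))
    (hs : ∀ e ∈ s, e ∈ G.edgeSet ∧ ∃ w ∈ e, G.degree w = 1) :
    meg (G.deleteEdges ↑s) ≤ meg G := by
  classical
  -- the defining set for meg G is nonempty
  have hne : {n | ∃ M : Finset V, IsMEGSet G ↑M ∧ M.card = n}.Nonempty :=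
    ⟨(Finset.univ : Finset V).card, Finset.univ, aux_univ_isMEGSet G, rfl⟩
  obtain ⟨M, hM, hMcard⟩ := Nat.sInf_mem hne
  -- the "bad" leaves and the replacement function
  set L : V → Prop := fun a => G.degree a = 1 ∧ ∃ e' ∈ s, a ∈ e' with hL
  have gdef : ∀ a : V, ∃ b : V, (L a → G.Adj a b) ∧ (¬ L a → b = a) := by
    intro a
    by_cases h : L a
    · obtain ⟨b, hb⟩ := aux_exists_adj h.1
      exact ⟨b, fun _ => hb, fun h' => absurd h h'⟩
    · exact ⟨a, fun h' => absurd h' h, fun _ => rfl⟩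
  choose g hg1 hg2 using gdef
  -- the key monitoring transfer
  have key : ∀ u v : V, ∀ e ∈ (G.deleteEdges ↑s).edgeSet,
      monitors G u v e → monitors (G.deleteEdges ↑s) (g u) (g v) e := by
    intro u v e he hm
    have he' : e ∈ G.edgeSet ∧ e ∉ (↑s : Set (Sym2 V)) := by
      rw [edgeSet_deleteEdges] at he; exact he
    -- a single-endpoint reduction step
    have step : ∀ x y : V, monitors G x y e → monitors G (g x) y e ∧ ¬ L (g x) := by
      intro x y hmxy
      by_cases hLx : L x
      · have hadj : G.Adj x (g x) := hg1 x hLx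
        -- the pendant edge at x belongs to s
        have hxe : s(x, g x) ∈ s := by
          obtain ⟨e', hes, hxe'⟩ := hLx.2
          obtain ⟨c, hc⟩ := Sym2.mem_iff_exists.1 hxe'
          subst hc
          have hcadj : G.Adj x c := (G.mem_edgeSet).1 (hs _ hes).1
          have : c = g x := aux_adj_eq_of_degree_one hLx.1 hcadj hadj
          rwa [this] at hes
        have hne : e ≠ s(x, g x) := fun h => he'.2 (h ▸ hxe)
        obtain ⟨hmon, hdegb⟩ := aux_reduce hLx.1 hadj hne hmxy
        exact ⟨hmon, fun hLb => hdegb hLb.1⟩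
      · rw [hg2 x hLx]
        exact ⟨hmxy, hLx⟩
    obtain ⟨hm1, hgu⟩ := step u v hm
    obtain ⟨hm2, hgv⟩ := step v (g u) (aux_monitors_symm hm1)
    exact aux_transfer s hs hgu hgv (aux_monitors_symm hm2) he
  -- image of M under g is an MEG-set of the smaller graph
  have hM' : IsMEGSet (G.deleteEdges ↑s) ↑(M.image g) := by
    intro e he
    have heG : e ∈ G.edgeSet := by
      rw [edgeSet_deleteEdges] at he; exact he.1
    obtain ⟨u, hu, v, hv, hm⟩ := hM e heG
    exact ⟨g u, by simpa using Finset.mem_image_of_mem g (by simpa using hu),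
      g v, by simpa using Finset.mem_image_of_mem g (by simpa using hv),
      key u v e he hm⟩
  calc meg (G.deleteEdges ↑s) ≤ (M.image g).card :=
        Nat.sInf_le ⟨M.image g, hM', rfl⟩
    _ ≤ M.card := Finset.card_image_le
    _ = meg G := hMcard
end

section
/- Let G be a connected graph and e = uv a cut edge with deg(u) ≥ 2 and deg(v) ≥ 2. Then meg(G) ≤ meg(G \ {e}) ≤ meg(G) + 2. -/
/-!
Let `H = G - uv` with `uv` a bridge. A shortest path of `G` between two vertices of the same
component of `H` never crosses `uv` (it would have to cross it twice), so inside a component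
distances and shortest paths of `G` and `H` agree, and monitoring pairs transfer both ways. A
shortest path from `x` on `u`'s side to `y` on `v`'s side is a shortest path `x ⇝ u`, then `uv`,
then a shortest path `v ⇝ y`; hence an edge of `H` monitored by `x, y` in `G` is monitored by
`x, u` or by `v, y` in `H`, and adding `u, v` to an MEG-set of `G` gives one of `H`. Conversely,
the degree condition puts an edge of `H` on each side, so an MEG-set of `H` has a vertex on each
side; such a pair monitors `uv` in `G`, and the MEG-set of `H` is one of `G`.
-/

open SimpleGraph

variable {V : Type*}

section Monitors

variable {G : SimpleGraph V} {x y a b : V} {f : Sym2 V}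

lemma monitors.symm (h : monitors G x y f) : monitors G y x f := by
  refine ⟨h.1.symm, fun p hp => ?_⟩
  simpa using h.2 p.reverse (by rw [Walk.length_reverse, hp, dist_comm])

lemma monitors_of_adj (h : G.Adj a b) : monitors G a b s(a, b) := by
  refine ⟨h.reachable, fun p hp => ?_⟩
  rw [dist_eq_one_iff_adj.mpr h] at hp
  cases p with
  | nil => simp at hp
  | cons _ q =>
    obtain rfl := Walk.eq_of_length_eq_zero (p := q) (by simpa using hp)
    simp

end Monitors

namespace SimpleGraph

variable {G : SimpleGraph V} {u v w x y : V}

lemma exists_adj_ne_of_two_le_degree [Fintype (G.neighborSet u)] (h : 2 ≤ G.degree u) (v : V) :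
    ∃ w, G.Adj u w ∧ w ≠ v := by
  obtain ⟨w, hw, hwv⟩ := Finset.exists_mem_ne (s := G.neighborFinset u)
    (by rw [card_neighborFinset_eq_degree]; omega) v
  exact ⟨w, (mem_neighborFinset G u w).mp hw, hwv⟩

lemma Connected.reachable_deleteEdges_or (hconn : G.Connected) (u v z : V) :
    (G.deleteEdges {s(u, v)}).Reachable u z ∨ (G.deleteEdges {s(u, v)}).Reachable v z := by
  by_contra h
  obtain ⟨p⟩ := hconn.preconnected u z
  obtain ⟨⟨⟨a, b⟩, hab⟩, -, ha, hb⟩ := p.exists_boundary_dart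
    {t | (G.deleteEdges {s(u, v)}).Reachable u t ∨ (G.deleteEdges {s(u, v)}).Reachable v t}
    (Or.inl .rfl) h
  apply hb
  by_cases he : s(a, b) = s(u, v)
  · rcases Sym2.eq_iff.mp he with ⟨-, rfl⟩ | ⟨-, rfl⟩
    exacts [Or.inr .rfl, Or.inl .rfl]
  · have hab' : (G.deleteEdges {s(u, v)}).Adj a b := deleteEdges_adj.mpr ⟨hab, he⟩
    exact ha.imp (·.trans hab'.reachable) (·.trans hab'.reachable)

lemma dist_eq_add_of_forall_mem_support (hxy : G.Reachable x y)
    (h : ∀ p : G.Walk x y, w ∈ p.support) : G.dist x y = G.dist x w + G.dist w y := by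
  classical
  obtain ⟨p, hp⟩ := hxy.exists_walk_length_eq_dist
  have hw := h p
  refine le_antisymm (Reachable.dist_triangle_left ⟨p.takeUntil w hw⟩ y) ?_
  calc G.dist x w + G.dist w y ≤ (p.takeUntil w hw).length + (p.dropUntil w hw).length :=
        add_le_add (dist_le _) (dist_le _)
    _ = G.dist x y := by rw [← Walk.length_append, Walk.take_spec, hp]

lemma Walk.IsTrail.notMem_edges_of_isBridge {p : G.Walk x y} (hp : p.IsTrail)
    (hb : G.IsBridge s(u, v)) (hxy : (G.deleteEdges {s(u, v)}).Reachable x y) :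
    s(u, v) ∉ p.edges := by
  by_cases hxv : (G.deleteEdges {s(u, v)}).Reachable x v
  · have hxu : ¬ (G.deleteEdges {s(u, v)}).Reachable x u := fun hxu => hb (hxu.symm.trans hxv)
    rw [Sym2.eq_swap]
    refine hp.not_mem_edges_of_not_reachable ?_ ?_ <;> rw [Sym2.eq_swap (a := v)]
    exacts [hxu, fun hyu => hxu (hxy.trans hyu)]
  · exact hp.not_mem_edges_of_not_reachable hxv fun hyv => hxv (hxy.trans hyv)

lemma IsBridge.dist_deleteEdges (hb : G.IsBridge s(u, v))
    (hxy : (G.deleteEdges {s(u, v)}).Reachable x y) :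
    (G.deleteEdges {s(u, v)}).dist x y = G.dist x y := by
  refine le_antisymm ?_ (hxy.dist_anti (deleteEdges_le _))
  obtain ⟨p, hp⟩ := (hxy.mono (deleteEdges_le _)).exists_walk_length_eq_dist
  have he := (p.isPath_of_length_eq_dist hp).isTrail.notMem_edges_of_isBridge hb hxy
  simpa [hp] using dist_le (p.toDeleteEdge _ he)

lemma IsBridge.dist_eq_dist_add_one_add_dist (huv : G.Adj u v) (hb : G.IsBridge s(u, v))
    (hx : (G.deleteEdges {s(u, v)}).Reachable x u) (hy : (G.deleteEdges {s(u, v)}).Reachable v y) :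
    G.dist x y = G.dist x u + 1 + G.dist v y := by
  have hGx := hx.mono (deleteEdges_le _)
  have hGy := hy.mono (deleteEdges_le _)
  have hxy : ¬ (G.deleteEdges {s(u, v)}).Reachable x y :=
    fun h => hb (hx.symm.trans (h.trans hy.symm))
  have huy : ¬ (G.deleteEdges {s(u, v)}).Reachable u y := fun h => hb (h.trans hy.symm)
  rw [dist_eq_add_of_forall_mem_support (hGx.trans (huv.reachable.trans hGy))
      fun p => p.fst_mem_support_of_mem_edges (p.mem_edges_of_not_reachable_deleteEdges hxy),
    dist_eq_add_of_forall_mem_support (huv.reachable.trans hGy)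
      fun p => p.snd_mem_support_of_mem_edges (p.mem_edges_of_not_reachable_deleteEdges huy),
    dist_eq_one_iff_adj.mpr huv, add_assoc]

lemma IsBridge.monitors_deleteEdges_iff (hb : G.IsBridge s(u, v))
    (hxy : (G.deleteEdges {s(u, v)}).Reachable x y) (f : Sym2 V) :
    monitors (G.deleteEdges {s(u, v)}) x y f ↔ monitors G x y f := by
  refine ⟨fun h => ⟨hxy.mono (deleteEdges_le _), fun p hp => ?_⟩,
    fun h => ⟨hxy, fun q hq => ?_⟩⟩
  · have he := (p.isPath_of_length_eq_dist hp).isTrail.notMem_edges_of_isBridge hb hxy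
    simpa using h.2 (p.toDeleteEdge _ he) (by simpa [hb.dist_deleteEdges hxy] using hp)
  · simpa using h.2 (q.mapLe (deleteEdges_le _)) (by simpa [← hb.dist_deleteEdges hxy] using hq)

lemma IsBridge.monitors_deleteEdges_left {a b : V} (huv : G.Adj u v)
    (hb : G.IsBridge s(u, v)) (hx : (G.deleteEdges {s(u, v)}).Reachable x u)
    (hy : (G.deleteEdges {s(u, v)}).Reachable v y) (hab : (G.deleteEdges {s(u, v)}).Adj a b)
    (hva : ¬ (G.deleteEdges {s(u, v)}).Reachable v a) (hm : monitors G x y s(a, b)) :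
    monitors (G.deleteEdges {s(u, v)}) x u s(a, b) := by
  classical
  rw [hb.monitors_deleteEdges_iff hx]
  refine ⟨hx.mono (deleteEdges_le _), fun q hq => ?_⟩
  obtain ⟨r, hr⟩ := hy.exists_walk_length_eq_dist
  have hmem := hm.2 (q.append (.cons huv (r.mapLe (deleteEdges_le _)))) (by
    simp only [Walk.length_append, Walk.length_cons, Walk.length_mapLe, hq, hr,
      hb.dist_deleteEdges hy, hb.dist_eq_dist_add_one_add_dist huv hx hy]
    ring)
  simp only [Walk.edges_append, Walk.edges_cons, Walk.edges_mapLe_eq_edges, List.mem_append,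
    List.mem_cons] at hmem
  rcases hmem with hq | he | hr
  · exact hq
  · exact absurd (he ▸ hab) (by simp)
  · exact absurd ⟨r.takeUntil a (r.fst_mem_support_of_mem_edges hr)⟩ hva

lemma IsBridge.monitors_deleteEdges_of_monitors (huv : G.Adj u v)
    (hb : G.IsBridge s(u, v)) (hx : (G.deleteEdges {s(u, v)}).Reachable x u)
    (hy : (G.deleteEdges {s(u, v)}).Reachable v y) {f : Sym2 V}
    (hf : f ∈ (G.deleteEdges {s(u, v)}).edgeSet) (hm : monitors G x y f) :
    monitors (G.deleteEdges {s(u, v)}) x u f ∨ monitors (G.deleteEdges {s(u, v)}) v y f := by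
  induction f using Sym2.ind with | _ a b =>
  by_cases hva : (G.deleteEdges {s(u, v)}).Reachable v a
  · have hswap : G.deleteEdges {s(v, u)} = G.deleteEdges {s(u, v)} := by rw [Sym2.eq_swap]
    have hb' : G.IsBridge s(v, u) := by rwa [Sym2.eq_swap]
    have hua : ¬ (G.deleteEdges {s(u, v)}).Reachable u a := fun h => hb (h.trans hva.symm)
    rw [← hswap] at hx hy hf hua ⊢
    exact .inr (hb'.monitors_deleteEdges_left huv.symm hy.symm hx.symm hf hua hm.symm).symm
  · exact .inl (hb.monitors_deleteEdges_left huv hx hy hf hva hm)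

end SimpleGraph

section MEGSet

variable {G : SimpleGraph V} {M : Set V} {u v : V}

lemma isMEGSet_univ (G : SimpleGraph V) : IsMEGSet G Set.univ := by
  intro f hf
  induction f using Sym2.ind with | _ a b =>
  exact ⟨a, trivial, b, trivial, monitors_of_adj hf⟩

lemma IsMEGSet.exists_reachable_of_adj {a b : V} (hM : IsMEGSet G M) (hab : G.Adj a b) :
    ∃ x ∈ M, G.Reachable x a := by
  classical
  obtain ⟨x, hx, y, -, hxy, hgeo⟩ := hM s(a, b) hab
  obtain ⟨p, hp⟩ := hxy.exists_walk_length_eq_dist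
  exact ⟨x, hx, ⟨p.takeUntil a (p.fst_mem_support_of_mem_edges (hgeo p hp))⟩⟩

lemma IsMEGSet.of_deleteEdges {x y : V} (hb : G.IsBridge s(u, v))
    (hM : IsMEGSet (G.deleteEdges {s(u, v)}) M) (hxM : x ∈ M)
    (hx : (G.deleteEdges {s(u, v)}).Reachable x u) (hyM : y ∈ M)
    (hy : (G.deleteEdges {s(u, v)}).Reachable y v) : IsMEGSet G M := by
  intro f hf
  by_cases hfe : f = s(u, v)
  · subst hfe
    refine ⟨x, hxM, y, hyM, ?_, fun p _ => p.mem_edges_of_not_reachable_deleteEdges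
      fun hxy => hb (hx.symm.trans (hxy.trans hy))⟩
    exact (hx.mono (deleteEdges_le _)).trans
      ((Adj.reachable hf).trans (hy.mono (deleteEdges_le _)).symm)
  · obtain ⟨x', hx', y', hy', hm⟩ := hM f (by rw [edgeSet_deleteEdges]; exact ⟨hf, hfe⟩)
    exact ⟨x', hx', y', hy', (hb.monitors_deleteEdges_iff hm.1 f).mp hm⟩

lemma IsMEGSet.deleteEdges_insert (hconn : G.Connected) (huv : G.Adj u v)
    (hb : G.IsBridge s(u, v)) (hM : IsMEGSet G M) :
    IsMEGSet (G.deleteEdges {s(u, v)}) (insert u (insert v M)) := by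
  intro f hf
  obtain ⟨x, hx, y, hy, hm⟩ := hM f (edgeSet_mono (deleteEdges_le _) hf)
  by_cases hxy : (G.deleteEdges {s(u, v)}).Reachable x y
  · exact ⟨x, by simp [hx], y, by simp [hy], (hb.monitors_deleteEdges_iff hxy f).mpr hm⟩
  rcases hconn.reachable_deleteEdges_or u v x with hux | hvx <;>
    rcases hconn.reachable_deleteEdges_or u v y with huy | hvy
  · exact absurd (hux.symm.trans huy) hxy
  · rcases hb.monitors_deleteEdges_of_monitors huv hux.symm hvy hf hm with h | h
    exacts [⟨x, by simp [hx], u, by simp, h⟩, ⟨v, by simp, y, by simp [hy], h⟩]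
  · rcases hb.monitors_deleteEdges_of_monitors huv huy.symm hvx hf hm.symm with h | h
    exacts [⟨y, by simp [hy], u, by simp, h⟩, ⟨v, by simp, x, by simp [hx], h⟩]
  · exact absurd (hvx.symm.trans hvy) hxy

end MEGSet

lemma meg_le_card_s14 {G : SimpleGraph V} {M : Finset V} (h : IsMEGSet G ↑M) : meg G ≤ M.card :=
  Nat.sInf_le ⟨M, h, rfl⟩

lemma exists_isMEGSet_card_eq_meg [Fintype V] (G : SimpleGraph V) :
    ∃ M : Finset V, IsMEGSet G ↑M ∧ M.card = meg G :=
  Nat.sInf_mem (s := {n | ∃ M : Finset V, IsMEGSet G ↑M ∧ M.card = n})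
    ⟨_, Finset.univ, by simpa using isMEGSet_univ G, rfl⟩

/-- Removing a cut edge whose endpoints both have degree at least `2`:
`meg G ≤ meg G' ≤ meg G + 2`. -/
theorem deleteCutEdge_meg [Fintype V] (G : SimpleGraph V) [DecidableRel G.Adj]
    (hconn : G.Connected) (u v : V) (huv : G.Adj u v)
    (hcut : ¬ (G.deleteEdges {s(u, v)}).Connected)
    (hu : 2 ≤ G.degree u) (hv : 2 ≤ G.degree v) :
    meg G ≤ meg (G.deleteEdges {s(u, v)}) ∧
    meg (G.deleteEdges {s(u, v)}) ≤ meg G + 2 := by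
  classical
  have hb : G.IsBridge s(u, v) :=
    not_not.mp fun h => hcut (hconn.connected_delete_edge_of_not_isBridge h)
  constructor
  · obtain ⟨M, hM, hcard⟩ := exists_isMEGSet_card_eq_meg (G.deleteEdges {s(u, v)})
    obtain ⟨w, huw, hwv⟩ := exists_adj_ne_of_two_le_degree hu v
    obtain ⟨w', hvw', hw'u⟩ := exists_adj_ne_of_two_le_degree hv u
    obtain ⟨x, hxM, hx⟩ :=
      hM.exists_reachable_of_adj (a := u) (b := w) (by simp [huw, hwv, huv.ne])
    obtain ⟨y, hyM, hy⟩ :=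
      hM.exists_reachable_of_adj (a := v) (b := w') (by simp [hvw', hw'u, huv.ne.symm])
    exact hcard ▸ meg_le_card_s14 (hM.of_deleteEdges hb hxM hx hyM hy)
  · obtain ⟨M, hM, hcard⟩ := exists_isMEGSet_card_eq_meg G
    rw [← hcard]
    calc meg (G.deleteEdges {s(u, v)}) ≤ (insert u (insert v M)).card :=
          meg_le_card_s14 (by simpa using hM.deleteEdges_insert hconn huv hb)
      _ ≤ M.card + 2 := by
          have := Finset.card_insert_le v M
          have := Finset.card_insert_le u (insert v M)
          omega
end

section
/- Let G be a connected graph, v a cut vertex of G, and e an edge incident to v such that G \ {e} is connected or e is a cut edge with both endpoints of degree ≥ 2. Then meg(G \ {e}) ≤ meg(G) + 2. -/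
open SimpleGraph

variable {V : Type*}

private lemma walk_length_one_edges {G : SimpleGraph V} {a b : V} (p : G.Walk a b)
    (h : p.length = 1) : p.edges = [s(a, b)] := by
  cases p with
  | nil => simp at h
  | cons hadj q =>
    cases q with
    | nil => simp
    | cons h2 q2 => simp [SimpleGraph.Walk.length_cons] at h

private lemma adj_monitors {G : SimpleGraph V} {x y : V} (hxy : G.Adj x y) :
    monitors G x y s(x, y) := by
  refine ⟨hxy.reachable, fun p hp => ?_⟩
  rw [walk_length_one_edges p (by rw [hp, SimpleGraph.dist_eq_one_iff_adj]; exact hxy)]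
  simp

private lemma mem4 {x a b u v w : V} (hw : w = u ∨ w = v)
    (hx : x = a ∨ x = w ∨ x = u ∨ x = v) : x = a ∨ x = b ∨ x = u ∨ x = v := by
  rcases hw with rfl | rfl <;> tauto

private lemma mem4' {x a b u v w : V} (hw : w = u ∨ w = v)
    (hx : x = w ∨ x = b ∨ x = u ∨ x = v) : x = a ∨ x = b ∨ x = u ∨ x = v := by
  rcases hw with rfl | rfl <;> tauto

private lemma key {G : SimpleGraph V} {u v : V} (huv : G.Adj v u) {f : Sym2 V}
    (hfe : f ≠ s(v, u)) :
    ∀ n a b, G.dist a b = n → monitors G a b f →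
      ∃ x y, (x = a ∨ x = b ∨ x = u ∨ x = v) ∧ (y = a ∨ y = b ∨ y = u ∨ y = v) ∧
        monitors (G.deleteEdges {s(v, u)}) x y f := by
  classical
  intro n
  induction n using Nat.strong_induction_on with
  | _ n ih =>
  intro a b hn hm
  obtain ⟨hreach, hmon⟩ := hm
  have hab : a ≠ b := by
    rintro rfl
    have := hmon SimpleGraph.Walk.nil (by simp [SimpleGraph.dist_self])
    simp at this
  have hdpos : 0 < G.dist a b := hreach.pos_dist_of_ne hab
  by_cases hc : ∃ p : (G.deleteEdges {s(v, u)}).Walk a b, p.length = G.dist a b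
  · obtain ⟨p, hp⟩ := hc
    have htr : ∀ (q : (G.deleteEdges {s(v, u)}).Walk a b),
        ∀ e ∈ q.edges, e ∈ G.edgeSet := by
      intro q e he
      have := q.edges_subset_edgeSet he
      rw [SimpleGraph.edgeSet_deleteEdges] at this
      exact this.1
    have hle : (G.deleteEdges {s(v, u)}).dist a b ≤ G.dist a b :=
      hp ▸ SimpleGraph.dist_le p
    have hreach' : (G.deleteEdges {s(v, u)}).Reachable a b := ⟨p⟩
    have hge : G.dist a b ≤ (G.deleteEdges {s(v, u)}).dist a b := by
      obtain ⟨q, hq⟩ := hreach'.exists_walk_length_eq_dist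
      calc G.dist a b ≤ (q.transfer G (htr q)).length := SimpleGraph.dist_le _
        _ = q.length := q.length_transfer _
        _ = _ := hq
    refine ⟨a, b, Or.inl rfl, Or.inr (Or.inl rfl), hreach', fun q hq => ?_⟩
    have : f ∈ (q.transfer G (htr q)).edges := by
      apply hmon
      rw [q.length_transfer]
      omega
    rwa [q.edges_transfer] at this
  · push_neg at hc
    have hall : ∀ p : G.Walk a b, p.length = G.dist a b → s(v, u) ∈ p.edges := by
      intro p hp
      by_contra he
      refine hc (p.transfer _ (fun ed hed => ?_)) (by rw [p.length_transfer]; exact hp)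
      rw [SimpleGraph.edgeSet_deleteEdges]
      refine ⟨p.edges_subset_edgeSet hed, fun h => ?_⟩
      rw [Set.mem_singleton_iff] at h
      subst h
      exact he hed
    obtain ⟨p0, hp0⟩ := hreach.exists_walk_length_eq_dist
    have he0 : s(v, u) ∈ p0.edges := hall p0 hp0
    have hvsup : v ∈ p0.support := p0.fst_mem_support_of_mem_edges he0
    have husup : u ∈ p0.support := p0.snd_mem_support_of_mem_edges he0
    have hvu : v ≠ u := huv.ne
    have main : ∀ w, (w = u ∨ w = v) → w ≠ a → w ≠ b → w ∈ p0.support →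
        ∃ x y, (x = a ∨ x = b ∨ x = u ∨ x = v) ∧ (y = a ∨ y = b ∨ y = u ∨ y = v) ∧
          monitors (G.deleteEdges {s(v, u)}) x y f := by
      intro w hw hwa hwb hwsup
      have hraw : G.Reachable a w := ⟨p0.takeUntil w hwsup⟩
      have hrwb : G.Reachable w b := ⟨p0.dropUntil w hwsup⟩
      have hsum : G.dist a w + G.dist w b = G.dist a b := by
        apply le_antisymm
        · have h1 : G.dist a w ≤ (p0.takeUntil w hwsup).length := SimpleGraph.dist_le _
          have h2 : G.dist w b ≤ (p0.dropUntil w hwsup).length := SimpleGraph.dist_le _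
          have h3 : (p0.takeUntil w hwsup).length + (p0.dropUntil w hwsup).length
              = p0.length := by
            rw [← SimpleGraph.Walk.length_append, p0.take_spec]
          omega
        · obtain ⟨pa, hpa⟩ := hraw.exists_walk_length_eq_dist
          obtain ⟨pb, hpb⟩ := hrwb.exists_walk_length_eq_dist
          have := SimpleGraph.dist_le (pa.append pb)
          rwa [SimpleGraph.Walk.length_append, hpa, hpb] at this
      have hwapos : 0 < G.dist a w := hraw.pos_dist_of_ne (fun h => hwa h.symm)
      have hwbpos : 0 < G.dist w b := hrwb.pos_dist_of_ne hwb
      have hsplit : monitors G a w f ∨ monitors G w b f := by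
        by_contra hno
        push_neg at hno
        obtain ⟨h1, h2⟩ := hno
        have e1 : ∃ pa : G.Walk a w, pa.length = G.dist a w ∧ f ∉ pa.edges := by
          by_contra hx
          push_neg at hx
          exact h1 ⟨hraw, fun p hp => hx p hp⟩
        have e2 : ∃ pb : G.Walk w b, pb.length = G.dist w b ∧ f ∉ pb.edges := by
          by_contra hx
          push_neg at hx
          exact h2 ⟨hrwb, fun p hp => hx p hp⟩
        obtain ⟨pa, hpa, hfa⟩ := e1
        obtain ⟨pb, hpb, hfb⟩ := e2
        have := hmon (pa.append pb) (by rw [SimpleGraph.Walk.length_append]; omega)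
        rw [SimpleGraph.Walk.edges_append, List.mem_append] at this
        tauto
      rcases hsplit with hs | hs
      · obtain ⟨x, y, hx, hy, hmon'⟩ := ih (G.dist a w) (by omega) a w rfl hs
        exact ⟨x, y, mem4 hw hx, mem4 hw hy, hmon'⟩
      · obtain ⟨x, y, hx, hy, hmon'⟩ := ih (G.dist w b) (by omega) w b rfl hs
        exact ⟨x, y, mem4' hw hx, mem4' hw hy, hmon'⟩
    by_cases h1 : v ≠ a ∧ v ≠ b
    · exact main v (Or.inr rfl) h1.1 h1.2 hvsup
    · by_cases h2 : u ≠ a ∧ u ≠ b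
      · exact main u (Or.inl rfl) h2.1 h2.2 husup
      · exfalso
        push_neg at h1 h2
        have hf0 : f ∈ p0.edges := hmon p0 hp0
        rcases Classical.em (v = a) with rfl | hva
        · rcases Classical.em (u = b) with rfl | hub
          · have hd1 : G.dist v u = 1 := SimpleGraph.dist_eq_one_iff_adj.mpr huv
            rw [walk_length_one_edges p0 (by omega), List.mem_singleton] at hf0
            exact hfe hf0
          · have huvv : u = v := by_contra fun h => hub (h2 h)
            exact hvu huvv.symm
        · rcases h1 hva with rfl
          rcases Classical.em (u = a) with rfl | hua
          · have hd1 : G.dist u v = 1 := SimpleGraph.dist_eq_one_iff_adj.mpr huv.symm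
            rw [walk_length_one_edges p0 (by omega), List.mem_singleton] at hf0
            exact hfe (hf0.trans (Sym2.eq_swap))
          · rcases h2 hua with rfl
            exact hvu rfl

/-- Removing an edge incident to a cut vertex (when either the result stays connected,
or the edge is a cut edge with both endpoints of degree at least `2`) increases `meg`
by at most `2`. -/
theorem deleteEdge_cutVertex_meg [Fintype V] (G : SimpleGraph V) [DecidableRel G.Adj]
    (hconn : G.Connected) (v : V)
    (hcutvtx : ¬ (G.induce ({v}ᶜ : Set V)).Connected)
    (u : V) (huv : G.Adj v u)
    (hcond : (G.deleteEdges {s(v, u)}).Connected ∨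
      (¬ (G.deleteEdges {s(v, u)}).Connected ∧ 2 ≤ G.degree v ∧ 2 ≤ G.degree u)) :
    meg (G.deleteEdges {s(v, u)}) ≤ meg G + 2 := by
  classical
  have hne : {n | ∃ M : Finset V, IsMEGSet G ↑M ∧ M.card = n}.Nonempty := by
    refine ⟨(Finset.univ : Finset V).card, Finset.univ, ?_, rfl⟩
    intro e he
    induction e using Sym2.ind with
    | _ x y =>
      rw [SimpleGraph.mem_edgeSet] at he
      exact ⟨x, by simp, y, by simp, adj_monitors he⟩
  obtain ⟨M, hM, hcard⟩ := Nat.sInf_mem hne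
  have hM' : IsMEGSet (G.deleteEdges {s(v, u)}) ↑(M ∪ {u, v}) := by
    intro f hf
    rw [SimpleGraph.edgeSet_deleteEdges] at hf
    have hfe : f ≠ s(v, u) := fun h => hf.2 (by rw [h]; rfl)
    obtain ⟨x, hx, y, hy, hmon⟩ := hM f hf.1
    obtain ⟨x', y', hx', hy', hmon'⟩ := key huv hfe (G.dist x y) x y rfl hmon
    rw [Finset.mem_coe] at hx hy
    refine ⟨x', ?_, y', ?_, hmon'⟩
    · rw [Finset.mem_coe, Finset.mem_union]
      rcases hx' with rfl | rfl | rfl | rfl <;> simp [hx, hy]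
    · rw [Finset.mem_coe, Finset.mem_union]
      rcases hy' with rfl | rfl | rfl | rfl <;> simp [hx, hy]
  have hle1 : meg (G.deleteEdges {s(v, u)}) ≤ (M ∪ {u, v}).card :=
    Nat.sInf_le ⟨M ∪ {u, v}, hM', rfl⟩
  have hle2 : (M ∪ {u, v}).card ≤ M.card + 2 := by
    have := Finset.card_union_le M ({u, v} : Finset V)
    have h2 : ({u, v} : Finset V).card ≤ 2 := Finset.card_le_two
    omega
  have hmeg : meg G = M.card := hcard.symm
  omega
end
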